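/- Let k ≥ 1 and n ≥ 1, and let y₁,…,y_{2k} ∈ ℝⁿ. With Q_{i,j} and J_{α,β} defined as the quadratic invariant combinations Q_{i,j} = Σ_{ℓ=1}^{k}(⟨y_i,y_{2ℓ-1}⟩⟨y_j,y_{2ℓ}⟩ − ⟨y_i,y_{2ℓ}⟩⟨y_j,y_{2ℓ-1}⟩) and J_{α,β} = Σ_{ℓ=1}^{k}(y_{2ℓ-1,α} y_{2ℓ,β} − y_{2ℓ-1,β} y_{2ℓ,α}), the following are equivalent: (i) Q_{2ℓ-1,2ℓ}(y) = 0 for all 1 ≤ ℓ ≤ k; (ii) Q_{i,j}(y) = 0 for all 1 ≤ i < j ≤ 2k; (iii) J_{α,β}(y) = 0 for all 1 ≤ α < β ≤ n. -/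

import Mathlib

/-!
Write `q_ℓ = y_{2ℓ-1}`, `p_ℓ = y_{2ℓ}`. The angular momentum `J = Σ_ℓ (q_ℓ p_ℓᵀ - p_ℓ q_ℓᵀ)` is
antisymmetric and `Q_{i,j} = y_iᵀ J y_j`, so (iii) ⇒ (ii) ⇒ (i). Conversely, pairing `J` with
itself and using antisymmetry gives `Σ_{α,β} J_{α,β}² = 2 Σ_ℓ q_ℓᵀ J p_ℓ = 2 Σ_ℓ Q_{2ℓ-1,2ℓ}`,
so (i) forces `J = 0`.
-/

open Finset

/-- Index of `y_{2ℓ-1}` (0-based) among the `2k` vectors. -/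
def oddIdx {k : ℕ} (ℓ : Fin k) : Fin (2*k) := ⟨2*ℓ.val, by have := ℓ.isLt; omega⟩

/-- Index of `y_{2ℓ}` (0-based) among the `2k` vectors. -/
def evenIdx {k : ℕ} (ℓ : Fin k) : Fin (2*k) := ⟨2*ℓ.val+1, by have := ℓ.isLt; omega⟩

/-- Euclidean inner product on `ℝⁿ`. -/
noncomputable def ip {n : ℕ} (u v : Fin n → ℝ) : ℝ := ∑ α, u α * v α

/-- The quadratic invariant `Q_{i,j} = Σ_ℓ (x_{i,2ℓ-1} x_{j,2ℓ} - x_{i,2ℓ} x_{j,2ℓ-1})`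
where `x_{i,j} = ⟨y_i, y_j⟩`. -/
noncomputable def Qinv {k n : ℕ} (y : Fin (2*k) → Fin n → ℝ) (i j : Fin (2*k)) : ℝ :=
  ∑ ℓ : Fin k, (ip (y i) (y (oddIdx ℓ)) * ip (y j) (y (evenIdx ℓ))
    - ip (y i) (y (evenIdx ℓ)) * ip (y j) (y (oddIdx ℓ)))

/-- The angular momentum component `J_{α,β}`. -/
noncomputable def angJ {k n : ℕ} (y : Fin (2*k) → Fin n → ℝ) (α β : Fin n) : ℝ :=
  ∑ ℓ : Fin k, (y (oddIdx ℓ) α * y (evenIdx ℓ) β - y (oddIdx ℓ) β * y (evenIdx ℓ) α)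

section Antisymm

variable {ι : Type*} [Fintype ι]

theorem sum_sum_mul_swap_of_antisymm {J : ι → ι → ℝ} (hJ : ∀ α β, J β α = -J α β)
    (u v : ι → ℝ) :
    ∑ α, ∑ β, u β * v α * J α β = -∑ α, ∑ β, u α * v β * J α β := by
  rw [sum_comm, ← sum_neg_distrib]
  refine sum_congr rfl fun α _ => ?_
  rw [← sum_neg_distrib]
  refine sum_congr rfl fun β _ => ?_
  rw [hJ]
  ring

theorem eq_zero_of_sum_sum_sq_eq_zero {J : ι → ι → ℝ} (h : ∑ α, ∑ β, J α β ^ 2 = 0)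
    (α β : ι) : J α β = 0 := by
  have hrow := (Fintype.sum_eq_zero_iff_of_nonneg
    fun α => sum_nonneg fun β _ => sq_nonneg (J α β)).mp h
  have hentry := (Fintype.sum_eq_zero_iff_of_nonneg
    fun β => sq_nonneg (J α β)).mp (congrFun hrow α)
  exact pow_eq_zero_iff two_ne_zero |>.mp (congrFun hentry β)

end Antisymm

theorem ip_mul_ip_sub_ip_mul_ip {n : ℕ} (a b q p : Fin n → ℝ) :
    ip a q * ip b p - ip a p * ip b q
      = ∑ α, ∑ β, a α * b β * (q α * p β - q β * p α) := by
  unfold ip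
  rw [sum_mul_sum, sum_mul_sum, ← sum_sub_distrib]
  refine sum_congr rfl fun α _ => ?_
  rw [← sum_sub_distrib]
  exact sum_congr rfl fun β _ => by ring

theorem oddIdx_lt_evenIdx {k : ℕ} (ℓ : Fin k) : oddIdx ℓ < evenIdx ℓ := by
  simp [oddIdx, evenIdx, Fin.lt_def]

section AngularMomentum

variable {k n : ℕ} (y : Fin (2*k) → Fin n → ℝ)

theorem angJ_swap (α β : Fin n) : angJ y β α = -angJ y α β := by
  unfold angJ
  rw [← sum_neg_distrib]
  exact sum_congr rfl fun ℓ _ => by ring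

theorem angJ_self (α : Fin n) : angJ y α α = 0 := by
  simp [angJ]

theorem angJ_eq_zero_of_forall_lt (h : ∀ α β : Fin n, α < β → angJ y α β = 0)
    (α β : Fin n) : angJ y α β = 0 := by
  rcases lt_trichotomy α β with hlt | rfl | hgt
  · exact h α β hlt
  · exact angJ_self y α
  · rw [angJ_swap, h β α hgt, neg_zero]

theorem Qinv_eq_sum_sum_angJ (i j : Fin (2*k)) :
    Qinv y i j = ∑ α, ∑ β, y i α * y j β * angJ y α β := by
  simp only [Qinv, ip_mul_ip_sub_ip_mul_ip, angJ, mul_sum]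
  rw [sum_comm]
  exact sum_congr rfl fun α _ => sum_comm

theorem sum_sum_angJ_sq :
    ∑ α, ∑ β, angJ y α β ^ 2 = 2 * ∑ ℓ : Fin k, Qinv y (oddIdx ℓ) (evenIdx ℓ) := by
  have pair : ∀ ℓ : Fin k,
      ∑ α, ∑ β, (y (oddIdx ℓ) α * y (evenIdx ℓ) β - y (oddIdx ℓ) β * y (evenIdx ℓ) α)
          * angJ y α β
        = 2 * Qinv y (oddIdx ℓ) (evenIdx ℓ) := by
    intro ℓ
    simp only [sub_mul, sum_sub_distrib]
    rw [sum_sum_mul_swap_of_antisymm (angJ_swap y) (y (oddIdx ℓ)) (y (evenIdx ℓ)),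
      Qinv_eq_sum_sum_angJ]
    ring
  calc ∑ α, ∑ β, angJ y α β ^ 2
      = ∑ ℓ : Fin k, ∑ α, ∑ β,
          (y (oddIdx ℓ) α * y (evenIdx ℓ) β - y (oddIdx ℓ) β * y (evenIdx ℓ) α)
            * angJ y α β := by
        simp only [sq]
        conv_lhs => enter [2, α, 2, β, 1]; rw [angJ]
        simp only [sum_mul]
        exact (sum_congr rfl fun α _ => sum_comm).trans sum_comm
    _ = 2 * ∑ ℓ : Fin k, Qinv y (oddIdx ℓ) (evenIdx ℓ) := by
        rw [mul_sum]
        exact sum_congr rfl fun ℓ _ => pair ℓ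

end AngularMomentum

theorem Q_J_tfae_general (k n : ℕ) (y : Fin (2*k) → Fin n → ℝ) :
    List.TFAE
      [∀ ℓ : Fin k, Qinv y (oddIdx ℓ) (evenIdx ℓ) = 0,
       ∀ i j : Fin (2*k), i < j → Qinv y i j = 0,
       ∀ α β : Fin n, α < β → angJ y α β = 0] := by
  tfae_have 2 → 1 := fun h ℓ => h _ _ (oddIdx_lt_evenIdx ℓ)
  tfae_have 1 → 3 := fun h α β _ =>
    eq_zero_of_sum_sum_sq_eq_zero (by simp [sum_sum_angJ_sq, h]) α β
  tfae_have 3 → 2 := fun h i j _ => by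
    simp [Qinv_eq_sum_sum_angJ, angJ_eq_zero_of_forall_lt y h]
  tfae_finish

/-- The equivalence of: vanishing of the diagonal `Q_{2ℓ-1,2ℓ}`, vanishing of all `Q_{i,j}`,
and vanishing of all angular momentum components `J_{α,β}`. -/
theorem Q_J_tfae (k n : ℕ) (hk : 1 ≤ k) (hn : 1 ≤ n) (y : Fin (2*k) → Fin n → ℝ) :
    List.TFAE
      [∀ ℓ : Fin k, Qinv y (oddIdx ℓ) (evenIdx ℓ) = 0,
       ∀ i j : Fin (2*k), i < j → Qinv y i j = 0,
       ∀ α β : Fin n, α < β → angJ y α β = 0] :=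
  Q_J_tfae_general k n y
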